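/- Let p be a polynomial in the Smith–Kidger Type 2 space P₂ ⊕ span{x₁x₂x₃, x₁x₂², x₂x₃², x₃x₁²}. If p vanishes at the four points (1,±1,±1) and at (1,0,0), then the integral of p(1,x₂,x₃) over [−1,1]² equals zero. -/

import Mathlib

/-!
The five-point rule `Q f = (f (1, 1) + f (1, -1) + f (-1, 1) + f (-1, -1)) / 3 + 8/3 · f (0, 0)`
integrates every polynomial of degree at most 3 exactly over `[-1, 1]²`: on a monomial `y^a z^b`
with `a` or `b` odd both sides vanish by symmetry, and on `1`, `y²`, `z²` both give `4`, `4/3`,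
`4/3`. Every element of the Smith–Kidger space has total degree at most 3, so `p (1, y, z)` has
degree at most 3 in `(y, z)`, and the five vanishing conditions say exactly that `Q` of it is `0`.
-/

open MvPolynomial

noncomputable def SK2 : Submodule ℝ (MvPolynomial (Fin 3) ℝ) :=
  MvPolynomial.restrictTotalDegree (Fin 3) ℝ 2 ⊔
    Submodule.span ℝ {X 0 * X 1 * X 2, X 0 * X 1 ^ 2, X 1 * X 2 ^ 2, X 2 * X 0 ^ 2}

open intervalIntegral

noncomputable def squareCubature (f : ℝ → ℝ → ℝ) : ℝ :=
  (f 1 1 + f 1 (-1) + f (-1) 1 + f (-1) (-1)) / 3 + 8 / 3 * f 0 0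

theorem integral_integral_pow_mul_pow_eq_squareCubature {a b : ℕ} (h : a + b ≤ 3) :
    ∫ y in (-1 : ℝ)..1, ∫ z in (-1 : ℝ)..1, y ^ a * z ^ b =
      squareCubature fun y z => y ^ a * z ^ b := by
  simp only [integral_const_mul, integral_mul_const, integral_pow]
  have ha : a ≤ 3 := by omega
  have hb : b ≤ 3 := by omega
  interval_cases a <;> interval_cases b <;> first | omega | norm_num [squareCubature]

theorem eval_one_monomial (y z : ℝ) (v : Fin 3 →₀ ℕ) (c : ℝ) :
    eval ![1, y, z] (monomial v c) = c * (y ^ v 1 * z ^ v 2) := by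
  simp [eval_monomial, Finsupp.prod_fintype, Fin.prod_univ_three]

theorem SK2_le_restrictTotalDegree_three : SK2 ≤ restrictTotalDegree (Fin 3) ℝ 3 := by
  refine sup_le (fun p hp => ?_) ?_
  · rw [mem_restrictTotalDegree] at *
    omega
  rw [Submodule.span_le]
  rintro q (rfl | rfl | rfl | rfl) <;> rw [SetLike.mem_coe, mem_restrictTotalDegree]
  · exact (((isHomogeneous_X ℝ 0).mul (isHomogeneous_X ℝ 1)).mul
      (isHomogeneous_X ℝ 2)).totalDegree_le
  · exact ((isHomogeneous_X ℝ 0).mul ((isHomogeneous_X ℝ 1).pow 2)).totalDegree_le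
  · exact ((isHomogeneous_X ℝ 1).mul ((isHomogeneous_X ℝ 2).pow 2)).totalDegree_le
  · exact ((isHomogeneous_X ℝ 2).mul ((isHomogeneous_X ℝ 0).pow 2)).totalDegree_le

theorem continuous_eval_one (p : MvPolynomial (Fin 3) ℝ) :
    Continuous fun yz : ℝ × ℝ => eval ![1, yz.1, yz.2] p :=
  (continuous_eval p).comp <| continuous_pi fun i => by fin_cases i <;> simp <;> fun_prop

noncomputable def faceIntegral : MvPolynomial (Fin 3) ℝ →ₗ[ℝ] ℝ where
  toFun p := ∫ y in (-1 : ℝ)..1, ∫ z in (-1 : ℝ)..1, eval ![1, y, z] p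
  map_add' p q := by
    have hint (r : MvPolynomial (Fin 3) ℝ) (y : ℝ) :
        IntervalIntegrable (fun z => eval ![1, y, z] r) MeasureTheory.volume (-1) 1 :=
      ((continuous_eval_one r).comp (Continuous.prodMk_right y)).intervalIntegrable _ _
    have hcont (r : MvPolynomial (Fin 3) ℝ) :
        Continuous fun y => ∫ z in (-1 : ℝ)..1, eval ![1, y, z] r :=
      continuous_parametric_intervalIntegral_of_continuous' (continuous_eval_one r) _ _
    simp only [map_add, integral_add (hint p _) (hint q _)]
    exact integral_add ((hcont p).intervalIntegrable _ _) ((hcont q).intervalIntegrable _ _)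
  map_smul' c p := by
    simp only [smul_eq_C_mul, map_mul, eval_C, integral_const_mul, RingHom.id_apply, smul_eq_mul]

noncomputable def faceCubature : MvPolynomial (Fin 3) ℝ →ₗ[ℝ] ℝ where
  toFun p := squareCubature fun y z => eval ![1, y, z] p
  map_add' p q := by simp only [squareCubature, map_add]; ring
  map_smul' c p := by simp only [squareCubature, smul_eval, smul_eq_mul, RingHom.id_apply]; ring

theorem faceIntegral_eq_faceCubature {p : MvPolynomial (Fin 3) ℝ}
    (hp : p ∈ restrictTotalDegree (Fin 3) ℝ 3) : faceIntegral p = faceCubature p := by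
  suffices restrictTotalDegree (Fin 3) ℝ 3 ≤ LinearMap.eqLocus faceIntegral faceCubature from
    this hp
  rw [restrictTotalDegree, restrictSupport_eq_span, Submodule.span_le]
  rintro _ ⟨v, hv, rfl⟩
  have hdeg : v 1 + v 2 ≤ 3 := by
    have hv : v.sum (fun _ e => e) ≤ 3 := hv
    rw [Finsupp.sum_fintype _ _ (fun _ => rfl), Fin.sum_univ_three] at hv
    omega
  simpa only [SetLike.mem_coe, LinearMap.mem_eqLocus, faceIntegral, faceCubature,
    LinearMap.coe_mk, AddHom.coe_mk, eval_one_monomial, one_mul] using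
    integral_integral_pow_mul_pow_eq_squareCubature hdeg

theorem stmt5 (p : MvPolynomial (Fin 3) ℝ) (hp : p ∈ SK2)
    (h1 : eval ![1, 1, 1] p = 0) (h2 : eval ![1, 1, -1] p = 0)
    (h3 : eval ![1, -1, 1] p = 0) (h4 : eval ![1, -1, -1] p = 0)
    (h5 : eval ![1, 0, 0] p = 0) :
    (∫ y in (-1 : ℝ)..1, ∫ z in (-1 : ℝ)..1, eval ![1, y, z] p) = 0 := by
  have := faceIntegral_eq_faceCubature (SK2_le_restrictTotalDegree_three hp)
  simpa [faceIntegral, faceCubature, squareCubature, h1, h2, h3, h4, h5] using this
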